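/- Assume 0 < π0 < 1 and π2, π3 > 0. Then L_crit > 0, L_crit is a root of the equation J(L,0)·(1 − L) − π0 = 0 (equivalently, 1 − L = π0·(1 + π2·L + π3·L²)), it is the unique nonnegative root of this equation, and moreover J(L1,0)·(1 − L1) − π0 > 0 for all 0 ≤ L1 < L_crit while J(L1,0)·(1 − L1) − π0 < 0 for all L1 > L_crit. -/

import Mathlib

/-! `Lcrit π0 π2 π3` is the positive root of the quadratic `π0 π3 L² + (1 + π0 π2) L + (π0 - 1)`,
whose constant term is negative. Since `J(L,0)(1 - L) - π0` is minus this quadratic divided by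
`1 + π2 L + π3 L²`, and the quadratic factors as `(L - Lcrit) (π0 π3 (L + Lcrit) + 1 + π0 π2)` with
the second factor positive for `L ≥ 0`, the sign of `J(L,0)(1 - L) - π0` on `L ≥ 0` is the sign of
`Lcrit - L`. -/

noncomputable section

/-- The flux `J(L1, L2)`. -/
def J (π2 π3 L1 L2 : ℝ) : ℝ :=
  1 / (1 + π2 * (L1 + L2) + π3 * (L1 ^ 2 + L2 ^ 2))

/-- The critical length `L_crit`. -/
def Lcrit (π0 π2 π3 : ℝ) : ℝ :=
  ((1 + π0 * π2) / (2 * π0 * π3)) *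
    (Real.sqrt (1 + 4 * (1 - π0) * π0 * π3 / (1 + π0 * π2) ^ 2) - 1)

/-- The root `(-b + √(discrim a b c)) / (2 * a)` of `a x² + b x + c`, written with `b` factored
out of the square root as in `Lcrit`. -/
def quadraticRoot (a b c : ℝ) : ℝ :=
  b / (2 * a) * (√(1 - 4 * a * c / b ^ 2) - 1)

section Quadratic

variable {a b c : ℝ}

theorem quadraticRoot_eval (ha : a ≠ 0) (hb : 0 < b) (hd : 0 ≤ discrim a b c) :
    a * quadraticRoot a b c ^ 2 + b * quadraticRoot a b c + c = 0 := by
  have hd' : 0 ≤ 1 - 4 * a * c / b ^ 2 := by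
    rw [one_sub_div (by positivity)]
    exact div_nonneg hd (by positivity)
  set s := b * √(1 - 4 * a * c / b ^ 2)
  have hs : discrim a b c = s * s := by
    rw [mul_mul_mul_comm, Real.mul_self_sqrt hd', discrim]
    field_simp
  have hroot : quadraticRoot a b c = (-b + s) / (2 * a) := by
    rw [quadraticRoot]
    ring
  rw [sq, (quadratic_eq_zero_iff ha hs _).mpr (Or.inl hroot)]

theorem quadraticRoot_pos (ha : 0 < a) (hb : 0 < b) (hc : c < 0) : 0 < quadraticRoot a b c := by
  have hsqrt : 1 < √(1 - 4 * a * c / b ^ 2) := by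
    rw [Real.lt_sqrt zero_le_one, one_pow, lt_sub_iff_add_lt, add_lt_iff_neg_left]
    exact div_neg_of_neg_of_pos (mul_neg_of_pos_of_neg (by positivity) hc) (by positivity)
  exact mul_pos (by positivity) (sub_pos.mpr hsqrt)

theorem quadratic_eq_sub_mul {r : ℝ} (hr : a * r ^ 2 + b * r + c = 0) (x : ℝ) :
    a * x ^ 2 + b * x + c = (x - r) * (a * (x + r) + b) := by
  linear_combination hr

end Quadratic

theorem Lcrit_eq_quadraticRoot (π0 π2 π3 : ℝ) :
    Lcrit π0 π2 π3 = quadraticRoot (π0 * π3) (1 + π0 * π2) (π0 - 1) := by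
  rw [Lcrit, quadraticRoot]
  ring_nf

section Flux

variable {π0 π2 π3 : ℝ}

theorem Lcrit_pos (hπ0 : 0 < π0) (hπ0' : π0 < 1) (hπ2 : 0 ≤ π2) (hπ3 : 0 < π3) :
    0 < Lcrit π0 π2 π3 := by
  rw [Lcrit_eq_quadraticRoot]
  exact quadraticRoot_pos (by positivity) (by positivity) (by linarith)

theorem Lcrit_isRoot (hπ0 : 0 < π0) (hπ0' : π0 < 1) (hπ2 : 0 ≤ π2) (hπ3 : 0 < π3) :
    π0 * π3 * Lcrit π0 π2 π3 ^ 2 + (1 + π0 * π2) * Lcrit π0 π2 π3 + (π0 - 1) = 0 := by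
  rw [Lcrit_eq_quadraticRoot]
  refine quadraticRoot_eval (by positivity) (by positivity) ?_
  rw [discrim]
  nlinarith [mul_pos hπ0 hπ3]

theorem sign_J_mul_one_sub_sub (hπ0 : 0 < π0) (hπ0' : π0 < 1) (hπ2 : 0 ≤ π2) (hπ3 : 0 < π3)
    {x : ℝ} (hx : 0 ≤ x) :
    SignType.sign (J π2 π3 x 0 * (1 - x) - π0) = SignType.sign (Lcrit π0 π2 π3 - x) := by
  have hroot := Lcrit_isRoot hπ0 hπ0' hπ2 hπ3
  have hL := Lcrit_pos hπ0 hπ0' hπ2 hπ3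
  set L := Lcrit π0 π2 π3
  have hfactor : J π2 π3 x 0 * (1 - x) - π0 =
      (L - x) * ((π0 * π3 * (x + L) + (1 + π0 * π2)) / (1 + π2 * x + π3 * x ^ 2)) := by
    simp only [J, add_zero, zero_pow two_ne_zero]
    field_simp
    linear_combination -quadratic_eq_sub_mul hroot x
  have hpos : 0 < (π0 * π3 * (x + L) + (1 + π0 * π2)) / (1 + π2 * x + π3 * x ^ 2) := by positivity
  rw [hfactor, sign_mul, sign_pos hpos, mul_one]

end Flux

/-- `L_crit > 0` is the unique nonnegative root of
`J(L,0)·(1 − L) − π0 = 0` (equivalently `1 − L = π0·(1 + π2·L + π3·L²)`), and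
`J(L1,0)·(1 − L1) − π0` is positive for `0 ≤ L1 < L_crit` and negative for `L1 > L_crit`. -/
theorem Lcrit_properties (π0 π2 π3 : ℝ)
    (hπ0 : 0 < π0) (hπ0' : π0 < 1) (hπ2 : 0 < π2) (hπ3 : 0 < π3) :
    0 < Lcrit π0 π2 π3 ∧
    J π2 π3 (Lcrit π0 π2 π3) 0 * (1 - Lcrit π0 π2 π3) - π0 = 0 ∧
    1 - Lcrit π0 π2 π3 =
      π0 * (1 + π2 * Lcrit π0 π2 π3 + π3 * (Lcrit π0 π2 π3) ^ 2) ∧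
    (∀ L : ℝ, 0 ≤ L → J π2 π3 L 0 * (1 - L) - π0 = 0 → L = Lcrit π0 π2 π3) ∧
    (∀ L1 : ℝ, 0 ≤ L1 → L1 < Lcrit π0 π2 π3 → 0 < J π2 π3 L1 0 * (1 - L1) - π0) ∧
    (∀ L1 : ℝ, Lcrit π0 π2 π3 < L1 → J π2 π3 L1 0 * (1 - L1) - π0 < 0) := by
  have hL := Lcrit_pos hπ0 hπ0' hπ2.le hπ3
  have hsign := fun x (hx : 0 ≤ x) => sign_J_mul_one_sub_sub hπ0 hπ0' hπ2.le hπ3 hx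
  refine ⟨hL, ?_, ?_, ?_, ?_, ?_⟩
  · rw [← sign_eq_zero_iff, hsign _ hL.le, sub_self, sign_zero]
  · linear_combination -Lcrit_isRoot hπ0 hπ0' hπ2.le hπ3
  · intro x hx hroot
    rwa [← sign_eq_zero_iff, hsign x hx, sign_eq_zero_iff, sub_eq_zero, eq_comm] at hroot
  · intro x hx hxL
    rwa [← sign_eq_one_iff, hsign x hx, sign_eq_one_iff, sub_pos]
  · intro x hLx
    rwa [← sign_eq_neg_one_iff, hsign x (hL.le.trans hLx.le), sign_eq_neg_one_iff, sub_neg]
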